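/- arXiv:2006.03811 — 5 statements merged into one kernel-verified Lean document; each statement's English description precedes it below -/
import Mathlib

section
/- If every cycle of a finite connected simple graph G with at least one cycle is odd and every vertex has even degree, then G has a vertex of degree 2. -/
open SimpleGraph Walk

namespace SimpleGraph
namespace Walk

variable {V : Type*} {G : SimpleGraph V}

lemma getVert_length_takeUntil' [DecidableEq V] {u v w : V} (p : G.Walk u v)
    (h : w ∈ p.support) : p.getVert (p.takeUntil w h).length = w := by
  have h2 : ((p.takeUntil w h).append (p.dropUntil w h)).getVert (p.takeUntil w h).length
      = w := by
    rw [getVert_append]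
    simp
  rwa [p.take_spec h] at h2

lemma getVert_injOn_of_isPath {u v : V} {p : G.Walk u v} (hp : p.IsPath) :
    ∀ i j, i ≤ p.length → j ≤ p.length → p.getVert i = p.getVert j → i = j := by
  induction p with
  | nil => intro i j hi hj _; simp at hi hj; omega
  | @cons a b c h q ih =>
    rw [cons_isPath_iff] at hp
    intro i j hi hj hij
    match i, j with
    | 0, 0 => rfl
    | 0, j + 1 =>
      exfalso
      rw [getVert_zero, getVert_cons_succ] at hij
      exact hp.2 (mem_support_iff_exists_getVert.mpr ⟨j, hij.symm, by simpa using hj⟩)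
    | i + 1, 0 =>
      exfalso
      rw [getVert_zero, getVert_cons_succ] at hij
      exact hp.2 (mem_support_iff_exists_getVert.mpr ⟨i, hij, by simpa using hi⟩)
    | i + 1, j + 1 =>
      rw [getVert_cons_succ, getVert_cons_succ] at hij
      have := ih hp.1 i j (by simpa using hi) (by simpa using hj) hij
      omega

lemma length_eq_one_of_isPath_of_mem_edges {u w : V} {q : G.Walk u w} (hq : q.IsPath)
    (hne : u ≠ w) (he : s(w, u) ∈ q.edges) : q.length = 1 := by
  cases q with
  | nil => simp at he
  | @cons _ x _ h q' =>
    rw [cons_isPath_iff] at hq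
    rw [edges_cons, List.mem_cons] at he
    rcases he with he | he
    · rw [Sym2.eq_iff] at he
      rcases he with ⟨rfl, rfl⟩ | ⟨hwx, -⟩
      · exact absurd rfl hne
      · subst hwx
        rw [isPath_iff_eq_nil.mp hq.1]
        simp
    · exact absurd (q'.snd_mem_support_of_mem_edges he) hq.2

lemma IsPath.concat_of_not_mem {a b c : V} {q : G.Walk a b} (hq : q.IsPath) (h : G.Adj b c)
    (hc : c ∉ q.support) : (q.concat h).IsPath := by
  rw [← isPath_reverse_iff, reverse_concat]
  exact hq.reverse.cons (by simpa using hc)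

end Walk
end SimpleGraph

/-- A finite connected graph with at least one cycle, in which every
vertex has even degree and every cycle is odd, has a vertex of degree 2. -/
theorem stmt_9 {V : Type*} [Fintype V] (G : SimpleGraph V) [DecidableRel G.Adj]
    (hconn : G.Connected)
    (heven : ∀ v : V, Even (G.degree v))
    (hcyc : ∃ (z : V) (w : G.Walk z z), w.IsCycle)
    (hodd : ∀ (z : V) (w : G.Walk z z), w.IsCycle → Odd w.length) :
    ∃ v : V, G.degree v = 2 := by
  classical
  by_contra hno
  push_neg at hno
  obtain ⟨z, c, hc⟩ := hcyc
  have hzadj : G.Adj z (c.getVert 1) := c.adj_snd hc.not_nil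
  -- every vertex has a neighbor
  have hadj : ∀ u : V, ∃ x, G.Adj u x := by
    intro u
    rcases eq_or_ne u z with rfl | hne
    · exact ⟨_, hzadj⟩
    · obtain ⟨w⟩ := hconn u z
      have hwn : ¬ w.Nil := by
        rw [Walk.nil_iff_length_eq]
        exact fun h0 => hne (Walk.eq_of_length_eq_zero h0)
      exact ⟨_, w.adj_snd hwn⟩
  -- every vertex has degree ≥ 3
  have hdeg3 : ∀ u : V, 3 ≤ G.degree u := by
    intro u
    obtain ⟨x, hx⟩ := hadj u
    have h1 : 0 < G.degree u := (G.degree_pos_iff_exists_adj u).mpr ⟨x, hx⟩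
    obtain ⟨r, hr⟩ := heven u
    have h3 := hno u
    omega
  -- a maximal path
  set L : Set ℕ := {n | ∃ (x y : V) (q : G.Walk x y), q.IsPath ∧ q.length = n} with hL
  have hLne : L.Nonempty := ⟨0, z, z, Walk.nil, Walk.IsPath.nil, rfl⟩
  have hLbdd : BddAbove L := by
    refine ⟨Fintype.card V, ?_⟩
    rintro n ⟨x, y, q, hq, rfl⟩
    exact hq.length_lt.le
  obtain ⟨a, b, p, hp, hplen⟩ := Nat.sSup_mem hLne hLbdd
  have hmax : ∀ (x y : V) (q : G.Walk x y), q.IsPath → q.length ≤ p.length := by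
    intro x y q hq
    rw [hplen]
    exact le_csSup hLbdd ⟨x, y, q, hq, rfl⟩
  -- all neighbors of a lie on p
  have hsupp : ∀ x, G.Adj a x → x ∈ p.support := by
    intro x hx
    by_contra hxs
    have hcons : (Walk.cons hx.symm p).IsPath := hp.cons hxs
    have := hmax _ _ _ hcons
    simp at this
  -- the position function
  set f : V → ℕ := fun x => if h : x ∈ p.support then (p.takeUntil x h).length else 0 with hf
  have hflen : ∀ x (h : x ∈ p.support), f x = (p.takeUntil x h).length := by
    intro x h; simp [hf, h]
  have hfget : ∀ x (h : x ∈ p.support), p.getVert (f x) = x := by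
    intro x h
    rw [hflen x h]
    exact p.getVert_length_takeUntil' h
  have hfle : ∀ x (h : x ∈ p.support), f x ≤ p.length := by
    intro x h
    rw [hflen x h]
    exact p.length_takeUntil_le h
  have hfinj : ∀ x y, x ∈ p.support → y ∈ p.support → f x = f y → x = y := by
    intro x y hx hy hxy
    rw [← hfget x hx, ← hfget y hy, hxy]
  have hfpos : ∀ x, G.Adj a x → 1 ≤ f x := by
    intro x hx
    rcases Nat.eq_zero_or_pos (f x) with h0 | h1
    · exfalso
      have := hfget x (hsupp x hx)
      rw [h0, Walk.getVert_zero] at this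
      exact hx.ne this
    · exact h1
  -- every neighbor is at position 1 or an even position
  have hfeven : ∀ x, G.Adj a x → f x = 1 ∨ Even (f x) := by
    intro x hx
    by_contra hcon
    push_neg at hcon
    obtain ⟨h1, hev⟩ := hcon
    rw [Nat.not_even_iff_odd] at hev
    have hxs := hsupp x hx
    have hq : (p.takeUntil x hxs).IsPath := hp.takeUntil hxs
    have hlen : (p.takeUntil x hxs).length = f x := (hflen x hxs).symm
    have hge2 : 2 ≤ (p.takeUntil x hxs).length := by
      obtain ⟨k, hk⟩ := hev
      omega
    have hcyc1 : (Walk.cons hx.symm (p.takeUntil x hxs)).IsCycle := by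
      rw [Walk.cons_isCycle_iff]
      refine ⟨hq, fun he => ?_⟩
      have := Walk.length_eq_one_of_isPath_of_mem_edges hq hx.ne he
      omega
    have hthis := hodd _ _ hcyc1
    rw [Walk.length_cons, hlen] at hthis
    obtain ⟨k, hk⟩ := hev
    obtain ⟨m, hm⟩ := hthis
    omega
  -- key: two neighbors at even positions give an even cycle
  have key : ∀ x y, G.Adj a x → G.Adj a y → x ≠ y → Even (f x) → Even (f y) →
      f x < f y → False := by
    intro x y hxa hya hxy hex hey hlt
    have hxs := hsupp x hxa
    have hys := hsupp y hya
    set q2 : G.Walk a y := p.takeUntil y hys with hq2def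
    have hq2 : q2.IsPath := hp.takeUntil hys
    have hq2len : q2.length = f y := (hflen y hys).symm
    -- x lies on q2
    have hxq2 : x ∈ q2.support := by
      have hP : p.getVert (f x) = x := hfget x hxs
      have : p.getVert (f x) = q2.getVert (f x) := by
        conv_lhs => rw [← p.take_spec hys]
        rw [Walk.getVert_append, if_pos (by omega : f x < q2.length)]
      exact Walk.mem_support_iff_exists_getVert.mpr ⟨f x, by rw [← this, hP], by omega⟩
    set t : G.Walk a x := q2.takeUntil x hxq2 with htdef
    set r : G.Walk x y := q2.dropUntil x hxq2 with hrdef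
    have hspec : t.append r = q2 := q2.take_spec hxq2
    have htlen : t.length = f x := by
      have h1 : q2.getVert t.length = x := q2.getVert_length_takeUntil' hxq2
      have h2 : q2.getVert (f x) = x := by
        have : p.getVert (f x) = q2.getVert (f x) := by
          conv_lhs => rw [← p.take_spec hys]
          rw [Walk.getVert_append, if_pos (by omega : f x < q2.length)]
        rw [← this]; exact hfget x hxs
      exact Walk.getVert_injOn_of_isPath hq2 t.length (f x)
        (q2.length_takeUntil_le hxq2) (by omega) (h1.trans h2.symm)
    have hrlen : r.length = f y - f x := by
      have := congrArg Walk.length hspec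
      rw [Walk.length_append] at this
      omega
    -- a is not on r
    have har : a ∉ r.support := by
      intro hmem
      have hnodup : (t.support ++ r.support.tail).Nodup := by
        have := hq2.2
        rwa [← hspec, Walk.support_append] at this
      have hat : a ∈ t.support := t.start_mem_support
      rcases List.mem_cons.mp (r.support_eq_cons ▸ hmem) with h | h
      · exact hxa.ne h
      · exact (List.disjoint_of_nodup_append hnodup) hat h
    have hr : r.IsPath := hq2.dropUntil hxq2
    -- the even cycle
    have hrc : (r.concat hya.symm).IsPath := hr.concat_of_not_mem hya.symm har
    have hcyc2 : (Walk.cons hxa (r.concat hya.symm)).IsCycle := by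
      rw [Walk.cons_isCycle_iff]
      refine ⟨hrc, fun he => ?_⟩
      rw [Walk.edges_concat, List.concat_eq_append, List.mem_append, List.mem_singleton] at he
      rcases he with he | he
      · exact har (r.fst_mem_support_of_mem_edges he)
      · rw [Sym2.eq_iff] at he
        rcases he with ⟨hay, hxa'⟩ | ⟨-, hxy'⟩
        · exact hxa.ne hxa'.symm
        · exact hxy hxy'
    have hoddc := hodd _ _ hcyc2
    rw [Walk.length_cons, Walk.length_concat] at hoddc
    obtain ⟨k1, hk1⟩ := hex
    obtain ⟨k2, hk2⟩ := hey
    obtain ⟨k3, hk3⟩ := hoddc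
    omega
  -- counting neighbors
  have hcard : 3 ≤ (G.neighborFinset a).card := by
    rw [G.card_neighborFinset_eq_degree]
    exact hdeg3 a
  set S := G.neighborFinset a with hS
  set SE := S.filter (fun x => Even (f x)) with hSE
  set S1 := S.filter (fun x => f x = 1) with hS1
  have hS1card : S1.card ≤ 1 := by
    rw [Finset.card_le_one]
    intro x hx y hy
    rw [hS1, Finset.mem_filter, hS, mem_neighborFinset] at hx hy
    exact hfinj x y (hsupp x hx.1) (hsupp y hy.1) (hx.2.trans hy.2.symm)
  have hsub : S ⊆ SE ∪ S1 := by
    intro x hxS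
    have hax : G.Adj a x := by rwa [hS, mem_neighborFinset] at hxS
    rcases hfeven x hax with h | h
    · exact Finset.mem_union_right _ (Finset.mem_filter.mpr ⟨hxS, h⟩)
    · exact Finset.mem_union_left _ (Finset.mem_filter.mpr ⟨hxS, h⟩)
  have hSEcard : 2 ≤ SE.card := by
    have h1 := Finset.card_le_card hsub
    have h2 := Finset.card_union_le SE S1
    omega
  obtain ⟨x, hxSE, y, hySE, hxy⟩ := Finset.one_lt_card.mp hSEcard
  rw [hSE, Finset.mem_filter, hS, mem_neighborFinset] at hxSE hySE
  have hne : f x ≠ f y := fun h =>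
    hxy (hfinj x y (hsupp x hxSE.1) (hsupp y hySE.1) h)
  rcases lt_or_gt_of_ne hne with h | h
  · exact key x y hxSE.1 hySE.1 hxy hxSE.2 hySE.2 h
  · exact key y x hySE.1 hxSE.1 hxy.symm hySE.2 hxSE.2 h
end

section
/- If a connected graph G with q edges and all vertex degrees even is graceful, then q ≡ 0 or 3 (mod 4); equivalently, an Euler graph with q ≡ 1 or 2 (mod 4) is not graceful. -/
/-- The label of an edge induced by a vertex labeling `φ`: the absolute
difference of the endpoint labels. -/
def edgeLabel {V : Type*} (φ : V → ℕ) : Sym2 V → ℕ :=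
  Sym2.lift ⟨fun u v => max (φ u) (φ v) - min (φ u) (φ v),
    fun u v => by simp only []; rw [max_comm, min_comm]⟩

/-- A finite graph with `q` edges is graceful if there is an injective vertex
labeling with values in `{0, …, q}` whose induced edge labels are exactly
`{1, …, q}`. -/
def IsGraceful {V : Type*} [Fintype V] (G : SimpleGraph V) [DecidableRel G.Adj] : Prop :=
  ∃ φ : V → ℕ, Function.Injective φ ∧
    (∀ u : V, φ u ≤ G.edgeFinset.card) ∧
    G.edgeFinset.image (edgeLabel φ) = Finset.Icc 1 G.edgeFinset.card

/-- Rosa–Golomb: a graceful connected graph with all degrees even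
(an Euler graph) with `q` edges satisfies `q ≡ 0` or `3 (mod 4)`. -/
theorem stmt_10 {V : Type*} [Fintype V] (G : SimpleGraph V) [DecidableRel G.Adj]
    (hconn : G.Connected)
    (heven : ∀ v : V, Even (G.degree v))
    (hgrace : IsGraceful G) :
    G.edgeFinset.card % 4 = 0 ∨ G.edgeFinset.card % 4 = 3 := by
  classical
  obtain ⟨φ, hinj, hle, himg⟩ := hgrace
  set q := G.edgeFinset.card with hq
  -- the labeling is injective on edges, so the sum of edge labels is 1 + ⋯ + q
  have hcard : (G.edgeFinset.image (edgeLabel φ)).card = q := by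
    rw [himg, Nat.card_Icc]; omega
  have hinjOn : Set.InjOn (edgeLabel φ) G.edgeFinset :=
    Finset.injOn_of_card_image_eq (by rw [hcard])
  have hsum : ∑ e ∈ G.edgeFinset, edgeLabel φ e = ∑ i ∈ Finset.Icc 1 q, i := by
    rw [← himg, Finset.sum_image (fun x hx y hy h => hinjOn hx hy h)]
  -- the sum of the edge labels is even, by a parity/degree argument
  have hpar : ((∑ e ∈ G.edgeFinset, edgeLabel φ e : ℕ) : ZMod 2) = 0 := by
    push_cast
    -- each edge label is congruent mod 2 to the sum over the dart fiber of φ ∘ fst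
    have hfib : ∀ e ∈ G.edgeFinset,
        ((edgeLabel φ e : ℕ) : ZMod 2)
          = ∑ d ∈ Finset.univ.filter (fun d : G.Dart => d.edge = e), (φ d.fst : ZMod 2) := by
      intro e he
      rw [SimpleGraph.mem_edgeFinset] at he
      induction' e with u v
      have hadj : G.Adj u v := he
      set d : G.Dart := ⟨(u, v), hadj⟩ with hd
      have hfiber : (Finset.univ.filter (fun d' : G.Dart => d'.edge = d.edge)) = {d, d.symm} := by
        have := SimpleGraph.Dart.edge_fiber d
        simpa using this
      have hde : d.edge = s(u, v) := rfl
      rw [hde] at hfiber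
      rw [hfiber, Finset.sum_pair d.symm_ne.symm]
      have h2 : min (φ u) (φ v) ≤ max (φ u) (φ v) := min_le_max
      have h3 : ((max (φ u) (φ v) - min (φ u) (φ v) : ℕ) : ZMod 2)
          = ((φ u : ZMod 2) + (φ v : ZMod 2)) := by
        rw [Nat.cast_sub h2, sub_eq_add_neg, CharTwo.neg_eq, ← Nat.cast_add, max_add_min,
          Nat.cast_add]
      show ((edgeLabel φ s(u, v) : ℕ) : ZMod 2) = (φ u : ZMod 2) + (φ v : ZMod 2)
      rw [show edgeLabel φ s(u, v) = max (φ u) (φ v) - min (φ u) (φ v) from rfl, h3]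
    rw [Finset.sum_congr rfl hfib,
      Finset.sum_fiberwise_of_maps_to (fun d _ => SimpleGraph.mem_edgeFinset.2 d.edge_mem)]
    -- now group darts by their first vertex
    rw [← Finset.sum_fiberwise_of_maps_to
      (fun d (_ : d ∈ Finset.univ) => Finset.mem_univ d.fst)
      (fun d : G.Dart => (φ d.fst : ZMod 2))]
    refine Finset.sum_eq_zero fun v _ => ?_
    have hconst : ∀ d ∈ Finset.univ.filter (fun d : G.Dart => d.fst = v),
        (φ d.fst : ZMod 2) = (φ v : ZMod 2) := by
      intro d hd
      rw [Finset.mem_filter] at hd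
      rw [hd.2]
    rw [Finset.sum_congr rfl hconst, Finset.sum_const]
    have hdeg : (Finset.univ.filter (fun d : G.Dart => d.fst = v)).card = G.degree v := by
      rw [Finset.filter_congr_decidable]
      exact G.dart_fst_fiber_card_eq_degree v
    rw [hdeg]
    obtain ⟨k, hk⟩ := heven v
    have hz : ((G.degree v : ℕ) : ZMod 2) = 0 := by
      rw [ZMod.natCast_eq_zero_iff]
      omega
    rw [nsmul_eq_mul, hz, zero_mul]
  -- so 2 ∣ 1 + ⋯ + q, hence 4 ∣ q(q+1)
  rw [hsum, ZMod.natCast_eq_zero_iff] at hpar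
  obtain ⟨m, hm⟩ := hpar
  have hIcc : ∑ i ∈ Finset.Icc 1 q, i = ∑ i ∈ Finset.range (q + 1), i := by
    have hins : Finset.range (q + 1) = insert 0 (Finset.Icc 1 q) := by
      ext x; simp [Finset.mem_range, Finset.mem_insert]; omega
    rw [hins, Finset.sum_insert (by simp), zero_add]
  have h2S : (∑ i ∈ Finset.Icc 1 q, i) * 2 = (q + 1) * q := by
    rw [hIcc]
    simpa using Finset.sum_range_id_mul_two (q + 1)
  have h4 : (q + 1) * q = 4 * m := by rw [← h2S, hm]; ring
  have hz4 : (q + 1) * q % 4 = 0 := by omega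
  have hmod : (q + 1) * q % 4 = ((q + 1) % 4) * (q % 4) % 4 := Nat.mul_mod _ _ _
  have hsucc : (q + 1) % 4 = (q % 4 + 1) % 4 := by omega
  have hcases : q % 4 = 0 ∨ q % 4 = 1 ∨ q % 4 = 2 ∨ q % 4 = 3 := by omega
  rw [hmod, hsucc] at hz4
  rcases hcases with h | h | h | h <;> rw [h] at hz4 <;> simp at hz4 ⊢ <;> omega
end

section
/- A bipartite Euler graph with a cycle decomposition containing an odd number ξ_2 of cycles of length ≡ 2 (mod 4) (all other cycles having length ≡ 0 (mod 4)) is not graceful; hence a necessary condition for a bipartite Euler graph to be graceful is that ξ_2 is even in every cycle decomposition. -/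
lemma edgeLabel_cast_two {V : Type*} (φ : V → ℕ) (a b : V) :
    ((edgeLabel φ s(a, b) : ℕ) : ZMod 2) = (φ a : ZMod 2) + φ b := by
  have h : edgeLabel φ s(a, b) = max (φ a) (φ b) - min (φ a) (φ b) := rfl
  have hx : ∀ x : ZMod 2, -x = x := by decide
  rw [h, Nat.cast_sub min_le_max, sub_eq_add_neg, hx, ← Nat.cast_add, max_add_min]
  push_cast; ring

lemma walk_sum_two {V : Type*} {G : SimpleGraph V} (φ : V → ℕ) :
    ∀ {a b : V} (w : G.Walk a b),
      ((w.edges.map fun e => ((edgeLabel φ e : ℕ) : ZMod 2)).sum) = (φ a : ZMod 2) + φ b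
  | a, _, SimpleGraph.Walk.nil => by
      have hx : ∀ x : ZMod 2, x + x = 0 := by decide
      simp [hx (φ a)]
  | a, b, SimpleGraph.Walk.cons (v := c) h w => by
      have hx : ∀ x : ZMod 2, x + x = 0 := by decide
      simp only [SimpleGraph.Walk.edges_cons, List.map_cons, List.sum_cons,
        walk_sum_two φ w, edgeLabel_cast_two]
      linear_combination hx (φ c)

/-- A bipartite Euler graph with a cycle decomposition having an odd
number `ξ₂` of cycles of length `≡ 2 (mod 4)` (all other cycles `≡ 0 (mod 4)`)
is not graceful; hence a graceful bipartite Euler graph has `ξ₂` even in every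
cycle decomposition. -/
theorem stmt_12 {V : Type*} [Fintype V] (G : SimpleGraph V) [DecidableRel G.Adj]
    (hbip : G.Colorable 2)
    (hconn : G.Connected)
    (heven : ∀ x : V, Even (G.degree x))
    (n : ℕ) (v : Fin n → V) (c : ∀ k : Fin n, G.Walk (v k) (v k))
    (hcyc : ∀ k, (c k).IsCycle)
    (hpart : ∀ e ∈ G.edgeSet, ∃! k : Fin n, e ∈ (c k).edges)
    (hlen : ∀ k, (c k).length % 4 = 0 ∨ (c k).length % 4 = 2)
    (ξ₂ : ℕ)
    (h2 : ξ₂ = (Finset.univ.filter fun k : Fin n => (c k).length % 4 = 2).card) :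
    (Odd ξ₂ → ¬ IsGraceful G) ∧ (IsGraceful G → Even ξ₂) := by
  classical
  set q := G.edgeFinset.card with hq
  -- edge sets of the cycles
  set Ek : Fin n → Finset (Sym2 V) := fun k => (c k).edges.toFinset with hEk
  have hnodup : ∀ k, (c k).edges.Nodup := fun k => (hcyc k).edges_nodup
  have hsub : ∀ k, Ek k ⊆ G.edgeFinset := by
    intro k e he
    rw [SimpleGraph.mem_edgeFinset]
    exact (c k).edges_subset_edgeSet (List.mem_toFinset.mp he)
  have hcover : G.edgeFinset = Finset.univ.biUnion Ek := by
    ext e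
    simp only [Finset.mem_biUnion, Finset.mem_univ, true_and, hEk, List.mem_toFinset]
    constructor
    · intro he
      obtain ⟨k, hk, -⟩ := hpart e (SimpleGraph.mem_edgeFinset.mp he)
      exact ⟨k, hk⟩
    · rintro ⟨k, hk⟩
      exact SimpleGraph.mem_edgeFinset.mpr ((c k).edges_subset_edgeSet hk)
  have hdisj : ∀ k ∈ Finset.univ, ∀ l ∈ Finset.univ, k ≠ l →
      Disjoint (Ek k) (Ek (l : Fin n)) := by
    intro k _ l _ hkl
    rw [Finset.disjoint_left]
    intro e hek hel
    have he : e ∈ G.edgeSet := (c k).edges_subset_edgeSet (List.mem_toFinset.mp hek)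
    obtain ⟨m, -, huniq⟩ := hpart e he
    exact hkl ((huniq k (List.mem_toFinset.mp hek)).trans
      (huniq l (List.mem_toFinset.mp hel)).symm)
  -- q is the sum of the cycle lengths
  have hqsum : q = ∑ k : Fin n, (c k).length := by
    rw [hq, hcover, Finset.card_biUnion hdisj]
    refine Finset.sum_congr rfl fun k _ => ?_
    rw [hEk]
    simp only []
    rw [List.toFinset_card_of_nodup (hnodup k), SimpleGraph.Walk.length_edges]
  -- q ≡ 2 ξ₂ (mod 4)
  have hqmod : q % 4 = (2 * ξ₂) % 4 := by
    rw [hqsum, Finset.sum_nat_mod]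
    have : ∀ k : Fin n, (c k).length % 4 = if (c k).length % 4 = 2 then 2 else 0 := by
      intro k
      rcases hlen k with h | h <;> simp [h]
    rw [Finset.sum_congr rfl fun k _ => this k]
    rw [← Finset.sum_filter, Finset.sum_const, smul_eq_mul, h2, mul_comm]
  have key : Odd ξ₂ → ¬ IsGraceful G := by
    intro hodd ⟨φ, hinj, hbound, himg⟩
    -- injectivity of edgeLabel on the edge set
    have hcard : (G.edgeFinset.image (edgeLabel φ)).card = q := by
      rw [himg, Nat.card_Icc]; omega
    have hinjOn : Set.InjOn (edgeLabel φ) G.edgeFinset :=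
      Finset.injOn_of_card_image_eq (by rw [hcard])
    -- the sum of the edge labels is 1 + 2 + ⋯ + q
    set S := ∑ e ∈ G.edgeFinset, edgeLabel φ e with hS
    have hS1 : S = ∑ i ∈ Finset.Icc 1 q, i := by
      rw [hS, ← himg, Finset.sum_image (fun x hx y hy h => hinjOn hx hy h)]
    have hgauss : S * 2 = (q + 1) * q := by
      rw [hS1]
      have : Finset.Icc 1 q = Finset.Ioo 0 (q + 1) := by
        ext x; simp [Nat.lt_succ_iff, Nat.one_le_iff_ne_zero, Nat.pos_iff_ne_zero]
      rw [this]
      have h0 : Finset.Ioo 0 (q+1) = (Finset.range (q+1)).erase 0 := by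
        ext x; simp [Nat.pos_iff_ne_zero, and_comm]
      rw [h0, Finset.sum_erase _ (by simp)]
      rw [Finset.sum_range_id_mul_two]
      simp
    -- the sum of edge labels is even
    have hSeven : (S : ZMod 2) = 0 := by
      rw [hS, Nat.cast_sum, hcover, Finset.sum_biUnion hdisj]
      have : ∀ k : Fin n, ∑ e ∈ Ek k, ((edgeLabel φ e : ℕ) : ZMod 2) = 0 := by
        intro k
        rw [hEk]
        simp only []
        rw [List.sum_toFinset _ (hnodup k), walk_sum_two φ (c k)]
        have hx : ∀ x : ZMod 2, x + x = 0 := by decide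
        exact hx _
      rw [Finset.sum_congr rfl fun k _ => this k]
      simp
    have hS2 : S % 2 = 0 := by
      have := (ZMod.natCast_eq_zero_iff S 2).mp hSeven
      omega
    -- but q ≡ 2 (mod 4) makes this impossible
    have hq2 : q % 4 = 2 := by
      obtain ⟨j, hj⟩ := hodd
      omega
    obtain ⟨m, hm⟩ : ∃ m, q = 4 * m + 2 := ⟨q / 4, by omega⟩
    obtain ⟨M, hM⟩ : ∃ M, (q + 1) * q = 16 * M + 20 * m + 6 :=
      ⟨m * m, by rw [hm]; ring⟩
    omega
  refine ⟨key, fun hg => ?_⟩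
  by_contra h
  exact key (Nat.not_even_iff_odd.mp h) hg
end

section
/- Let G be a 2-connected graph in which every cycle has length ≡ i (mod 4) or ≡ j (mod 4) for fixed distinct i, j ∈ {0,1,2,3}, and suppose G contains at least one cycle of each type. Then G contains two cycles, one of length ≡ i (mod 4) and one of length ≡ j (mod 4), which share at least one vertex and are connected through a common cycle; in particular there exist a cycle of type i and a cycle of type j that intersect. -/
namespace Stmt16Aux

open SimpleGraph

variable {V : Type*} {G : SimpleGraph V}

/-- Along a path ending in `S`, there is a first vertex belonging to `S`. -/
lemma firstHit (S : Set V) : ∀ {v u : V} (p : G.Walk v u), p.IsPath → u ∈ S →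
    ∃ y : V, y ∈ S ∧ ∃ q : G.Walk v y, q.IsPath ∧
      (∀ z ∈ q.support, z ∈ S → z = y) ∧ (∀ z ∈ q.support, z ∈ p.support) := by
  classical
  intro v u p
  induction p with
  | nil =>
      intro _ hu
      exact ⟨_, hu, Walk.nil, by simp, by simp +contextual, by simp⟩
  | @cons a b c h p ih =>
      intro hp hu
      by_cases ha : a ∈ S
      · refine ⟨a, ha, Walk.nil, by simp, by simp +contextual, by simp⟩
      · obtain ⟨y, hyS, q, hq, hfirst, hsub⟩ := ih hp.of_cons hu
        refine ⟨y, hyS, Walk.cons h q, ?_, ?_, ?_⟩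
        · rw [Walk.isPath_def, Walk.support_cons]
          refine List.nodup_cons.2 ⟨fun hmem => ?_, hq.support_nodup⟩
          exact ((Walk.cons_isPath_iff h p).mp hp).2 (hsub _ hmem)
        · intro z hz hzS
          rcases List.mem_cons.1 (by simpa using hz) with rfl | hz'
          · exact absurd hzS ha
          · exact hfirst z hz' hzS
        · intro z hz
          rcases List.mem_cons.1 (by simpa using hz) with rfl | hz'
          · simp
          · rw [Walk.support_cons]
            exact List.mem_cons.2 (Or.inr (hsub z hz'))

lemma mem_rotate_support [DecidableEq V] {v u x : V} (c : G.Walk v v) (h : u ∈ c.support) :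
    x ∈ (c.rotate u h).support ↔ x ∈ c.support := by
  conv_rhs => rw [← c.take_spec h]
  rw [Walk.rotate, Walk.mem_support_append_iff, Walk.mem_support_append_iff]
  tauto

lemma exists_adj {α : Type*} {H : SimpleGraph α} (hH : H.Connected) {a b : α} (hab : a ≠ b) :
    ∃ c, H.Adj a c := by
  obtain ⟨w⟩ := hH a b
  cases w with
  | nil => exact absurd rfl hab
  | cons h _ => exact ⟨_, h⟩

/-- From the 2-connectivity hypothesis: a path between any two vertices avoiding a
third vertex. -/
lemma walk_avoid
    (h2conn : ∀ x : V, (((⊤ : G.Subgraph).deleteVerts {x}).coe).Connected)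
    {x a b : V} (ha : a ≠ x) (hb : b ≠ x) :
    ∃ p : G.Walk a b, p.IsPath ∧ x ∉ p.support := by
  classical
  have hconn' := h2conn x
  have ha' : a ∈ ((⊤ : G.Subgraph).deleteVerts {x}).verts := by simp [ha]
  have hb' : b ∈ ((⊤ : G.Subgraph).deleteVerts {x}).verts := by simp [hb]
  obtain ⟨w⟩ := hconn' ⟨a, ha'⟩ ⟨b, hb'⟩
  let p : G.Walk a b := w.map ((⊤ : G.Subgraph).deleteVerts {x}).hom
  have hxp : x ∉ p.support := by
    intro hx
    rw [show p.support = _ from Walk.support_map .., List.mem_map] at hx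
    obtain ⟨s, _, hs⟩ := hx
    have := s.2
    simp only [Subgraph.deleteVerts_verts, Subgraph.verts_top, Set.mem_diff,
      Set.mem_singleton_iff] at this
    exact this.2 hs
  exact ⟨p.bypass, p.bypass_isPath, fun hx => hxp (p.support_bypass_subset hx)⟩

/-- A cycle through two adjacent vertices. -/
lemma cycle_thru_adj [Fintype V] (hcard : 3 ≤ Fintype.card V)
    (h2conn : ∀ x : V, (((⊤ : G.Subgraph).deleteVerts {x}).coe).Connected)
    {u v : V} (huv : G.Adj u v) :
    ∃ (z : V) (w : G.Walk z z), w.IsCycle ∧ u ∈ w.support ∧ v ∈ w.support := by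
  classical
  -- a third vertex
  have hthird : ∃ t : V, t ≠ u ∧ t ≠ v := by
    by_contra hcon
    push_neg at hcon
    have hsub : (Finset.univ : Finset V) ⊆ {u, v} := by
      intro t _
      by_cases htu : t = u
      · simp [htu]
      · simp [hcon t htu]
    have := Finset.card_le_card hsub
    have h2 : ({u, v} : Finset V).card ≤ 2 :=
      (Finset.card_insert_le _ _).trans (by simp)
    rw [Finset.card_univ] at this
    omega
  obtain ⟨t, htu, htv⟩ := hthird
  -- a neighbor w of u distinct from v
  have hu' : u ∈ ((⊤ : G.Subgraph).deleteVerts {v}).verts := by simp [huv.ne]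
  have ht' : t ∈ ((⊤ : G.Subgraph).deleteVerts {v}).verts := by simp [htv]
  obtain ⟨c, hc⟩ := exists_adj (h2conn v) (a := ⟨u, hu'⟩) (b := ⟨t, ht'⟩)
    (fun h => htu (congrArg Subtype.val h).symm)
  have huw : G.Adj u c.val := ((⊤ : G.Subgraph).deleteVerts {v}).coe_adj_sub _ _ hc
  have hwv : c.val ≠ v := by
    have := c.2
    simp only [Subgraph.deleteVerts_verts, Subgraph.verts_top, Set.mem_diff,
      Set.mem_singleton_iff] at this
    exact this.2
  -- a path from w to v avoiding u
  obtain ⟨q, hq, huq⟩ := walk_avoid h2conn (x := u) huw.ne' huv.ne'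
  -- build the cycle u - w - ... - v - u
  refine ⟨u, Walk.cons huw (q.concat huv.symm), ?_, ?_, ?_⟩
  · rw [Walk.cons_isCycle_iff]
    constructor
    · rw [Walk.isPath_def, Walk.support_concat]
      rw [List.nodup_append]
      exact ⟨hq.support_nodup, List.nodup_singleton u,
        by simpa using fun a ha (h : a = u) => huq (h ▸ ha)⟩
    · intro hmem
      rw [Walk.edges_concat, List.concat_eq_append, List.mem_append] at hmem
      rcases hmem with hmem | hmem
      · exact huq (Walk.fst_mem_support_of_mem_edges q hmem)
      · rw [List.mem_singleton, Sym2.eq_iff] at hmem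
        rcases hmem with ⟨h1, _⟩ | ⟨_, h2⟩
        · exact huv.ne h1
        · exact hwv h2
  · exact Walk.start_mem_support _
  · rw [Walk.support_cons]
    refine List.mem_cons.2 (Or.inr ?_)
    rw [Walk.support_concat, List.mem_append]
    exact Or.inl (Walk.end_mem_support q)

/-- A cycle through any two distinct vertices of a 2-connected graph. -/
lemma cycle_thru_two [Fintype V] (hcard : 3 ≤ Fintype.card V)
    (hconn : G.Connected)
    (h2conn : ∀ x : V, (((⊤ : G.Subgraph).deleteVerts {x}).coe).Connected)
    {u v : V} (huv : u ≠ v) :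
    ∃ (z : V) (w : G.Walk z z), w.IsCycle ∧ u ∈ w.support ∧ v ∈ w.support := by
  classical
  have key : ∀ n : ℕ, ∀ u v : V, u ≠ v → G.dist u v = n →
      ∃ (z : V) (w : G.Walk z z), w.IsCycle ∧ u ∈ w.support ∧ v ∈ w.support := by
    intro n
    induction n using Nat.strong_induction_on with
    | _ n ih =>
      intro u v huv hd
      have hdne : G.dist u v ≠ 0 := by
        rw [SimpleGraph.dist_ne_zero_iff_ne_and_reachable]
        exact ⟨huv, hconn.preconnected u v⟩
      rcases Nat.lt_or_ge n 2 with h2 | h2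
      · have h1 : G.dist u v = 1 := by omega
        exact cycle_thru_adj hcard h2conn (SimpleGraph.dist_eq_one_iff_adj.mp h1)
      · -- take a shortest walk from v to u; x is the second vertex
        obtain ⟨p, hp, hlen⟩ := (hconn.preconnected v u).exists_path_of_dist
        have hlen' : p.length = n := by rw [hlen, SimpleGraph.dist_comm, hd]
        cases p with
        | nil => simp at hlen'; omega
        | @cons _ x _ hvx p₂ =>
          have hlen₂ : p₂.length = n - 1 := by
            simp only [Walk.length_cons] at hlen'
            omega
          have hdux : G.dist u x = n - 1 := by
            have hle : G.dist u x ≤ n - 1 := by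
              have := SimpleGraph.dist_le p₂.reverse
              rwa [Walk.length_reverse, hlen₂] at this
            have hge : n ≤ G.dist u x + 1 := by
              have htri := hconn.dist_triangle (u := u) (v := x) (w := v)
              have : G.dist x v = 1 := SimpleGraph.dist_eq_one_iff_adj.mpr hvx.symm
              omega
            omega
          have hux : u ≠ x := by
            intro h
            rw [← h] at hdux
            simp [SimpleGraph.dist_self] at hdux
            omega
          obtain ⟨z₀, C₀, hC₀, huC₀, hxC₀⟩ := ih (n - 1) (by omega) u x hux hdux
          by_cases hvC : v ∈ C₀.support
          · exact ⟨z₀, C₀, hC₀, huC₀, hvC⟩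
          -- rotate the cycle to be based at x
          · set C : G.Walk x x := C₀.rotate x hxC₀ with hCdef
            have hC : C.IsCycle := hC₀.rotate hxC₀
            have hmemC : ∀ w : V, w ∈ C.support ↔ w ∈ C₀.support :=
              fun w => mem_rotate_support C₀ hxC₀
            have huC : u ∈ C.support := (hmemC u).mpr huC₀
            have hvC' : v ∉ C.support := fun h => hvC ((hmemC v).mp h)
            have hvx' : v ≠ x := hvx.ne
            -- a path from v to u avoiding x
            obtain ⟨p₁, hp₁, hxp₁⟩ := walk_avoid h2conn (x := x) hvx' hux
            -- first vertex of p₁ on C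
            obtain ⟨y, hyC, q, hq, hfirst, hsubq⟩ :=
              firstHit {z | z ∈ C.support} p₁ hp₁ huC
            have hxq : x ∉ q.support := fun h => hxp₁ (hsubq x h)
            have hyx : y ≠ x := fun h => hxq (h ▸ Walk.end_mem_support q)
            -- split the cycle at y
            have hsplit := C.take_spec hyC
            set TU : G.Walk x y := C.takeUntil y hyC with hTU
            set DU : G.Walk y x := C.dropUntil y hyC with hDU
            have hsup : C.support = TU.support ++ DU.support.tail := by
              conv_lhs => rw [← hsplit]
              exact Walk.support_append TU DU
            have htail : C.support.tail = TU.support.tail ++ DU.support.tail := by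
              have h1 : C.support = x :: C.support.tail := Walk.support_eq_cons C
              have h2 : TU.support = x :: TU.support.tail := Walk.support_eq_cons TU
              rw [h1, h2] at hsup
              simpa only [List.cons_append, List.cons.injEq, true_and] using hsup
            have hnd : (TU.support.tail ++ DU.support.tail).Nodup := by
              rw [← htail]; exact hC.support_nodup
            have hdisj : List.Disjoint TU.support.tail DU.support.tail :=
              List.disjoint_of_nodup_append hnd
            have hxDU : x ∈ DU.support.tail := Walk.end_mem_tail_support_of_ne hyx DU
            have hyTU : y ∈ TU.support.tail :=
              Walk.end_mem_tail_support_of_ne (Ne.symm hyx) TU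
            have hTUpath : TU.IsPath := by
              apply Walk.IsPath.mk'
              rw [Walk.support_eq_cons TU]
              refine List.nodup_cons.2 ⟨fun h => hdisj h hxDU, ?_⟩
              exact ((List.sublist_append_left _ _).nodup hnd)
            have hDUpath : DU.IsPath := by
              apply Walk.IsPath.mk'
              rw [Walk.support_eq_cons DU]
              refine List.nodup_cons.2 ⟨fun h => hdisj hyTU h, ?_⟩
              exact ((List.sublist_append_right _ _).nodup hnd)
            -- choose the arc of the cycle from y to x through u
            have hA : ∃ A : G.Walk y x, A.IsPath ∧ u ∈ A.support ∧
                ∀ z ∈ A.support, z ∈ C.support := by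
              have : u ∈ TU.support ∨ u ∈ DU.support.tail := by
                rw [← List.mem_append, ← hsup]; exact huC
              rcases this with h | h
              · refine ⟨TU.reverse, hTUpath.reverse, ?_, ?_⟩
                · rw [Walk.support_reverse, List.mem_reverse]; exact h
                · intro z hz
                  rw [Walk.support_reverse, List.mem_reverse] at hz
                  exact C.support_takeUntil_subset hyC hz
              · refine ⟨DU, hDUpath, List.mem_of_mem_tail h, ?_⟩
                intro z hz
                exact C.support_dropUntil_subset hyC hz
            obtain ⟨A, hApath, huA, hAsub⟩ := hA
            -- assemble the cycle  x → v → ... → y → ... → x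
            have hyA : y ∉ A.support.tail := by
              have := hApath.support_nodup
              rw [Walk.support_eq_cons A, List.nodup_cons] at this
              exact this.1
            have hRpath : (q.append A).IsPath := by
              apply Walk.IsPath.mk'
              rw [Walk.support_append, List.nodup_append]
              refine ⟨hq.support_nodup, ?_, ?_⟩
              · have := hApath.support_nodup
                rw [Walk.support_eq_cons A, List.nodup_cons] at this
                exact this.2
              · intro z hz w hz' hzw
                subst hzw
                have hzC : z ∈ C.support := hAsub z (List.mem_of_mem_tail hz')
                have : z = y := hfirst z hz hzC
                exact hyA (this ▸ hz')
            have hxvadj : G.Adj x v := hvx.symm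
            refine ⟨x, Walk.cons hxvadj (q.append A), ?_, ?_, ?_⟩
            · rw [Walk.cons_isCycle_iff]
              refine ⟨hRpath, fun hmem => ?_⟩
              rw [Walk.edges_append, List.mem_append] at hmem
              rcases hmem with hmem | hmem
              · exact hxq (Walk.fst_mem_support_of_mem_edges q hmem)
              · exact hvC' (hAsub v (Walk.snd_mem_support_of_mem_edges A hmem))
            · rw [Walk.support_cons]
              refine List.mem_cons.2 (Or.inr ?_)
              rw [Walk.mem_support_append_iff]
              exact Or.inr huA
            · rw [Walk.support_cons]
              refine List.mem_cons.2 (Or.inr ?_)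
              rw [Walk.mem_support_append_iff]
              exact Or.inl (Walk.start_mem_support q)
  exact key (G.dist u v) u v huv rfl

end Stmt16Aux

/-- Let `G` be a 2-connected graph (a block: connected, at least 3
vertices, and removing any vertex leaves it connected) in which every cycle has
length `≡ i` or `≡ j (mod 4)` for fixed distinct `i, j ∈ {0,1,2,3}`, and which
contains at least one cycle of each type. Then there exist a cycle of type `i`
and a cycle of type `j` that intersect (share a vertex). -/
theorem stmt_16 {V : Type*} [Fintype V] (G : SimpleGraph V)
    (i j : ℕ) (hi : i < 4) (hj : j < 4) (hij : i ≠ j)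
    (hcard : 3 ≤ Fintype.card V)
    (hconn : G.Connected)
    (h2conn : ∀ x : V, (((⊤ : G.Subgraph).deleteVerts {x}).coe).Connected)
    (hall : ∀ (z : V) (w : G.Walk z z), w.IsCycle →
      w.length % 4 = i ∨ w.length % 4 = j)
    (hexi : ∃ (z : V) (w : G.Walk z z), w.IsCycle ∧ w.length % 4 = i)
    (hexj : ∃ (z : V) (w : G.Walk z z), w.IsCycle ∧ w.length % 4 = j) :
    ∃ (u v : V) (c₁ : G.Walk u u) (c₂ : G.Walk v v),
      c₁.IsCycle ∧ c₂.IsCycle ∧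
      c₁.length % 4 = i ∧ c₂.length % 4 = j ∧
      ∃ x : V, x ∈ c₁.support ∧ x ∈ c₂.support := by
  classical
  obtain ⟨z₁, c₁, hc₁, hl₁⟩ := hexi
  obtain ⟨z₂, c₂, hc₂, hl₂⟩ := hexj
  by_cases hshare : ∃ x : V, x ∈ c₁.support ∧ x ∈ c₂.support
  · exact ⟨z₁, z₂, c₁, c₂, hc₁, hc₂, hl₁, hl₂, hshare⟩
  · have hz12 : z₁ ≠ z₂ := by
      intro h
      exact hshare ⟨z₁, c₁.start_mem_support, h ▸ c₂.start_mem_support⟩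
    obtain ⟨z, E, hE, hz₁E, hz₂E⟩ :=
      Stmt16Aux.cycle_thru_two hcard hconn h2conn hz12
    rcases hall z E hE with hEi | hEj
    · exact ⟨z, z₂, E, c₂, hE, hc₂, hEi, hl₂, z₂, hz₂E, c₂.start_mem_support⟩
    · exact ⟨z₁, z, c₁, E, hc₁, hE, hl₁, hEj, z₁, c₁.start_mem_support, hz₁E⟩
end

section
/- In any graph, if every edge lies on at least one cycle and every cycle is odd, and the graph is connected and finite with minimum degree at least 4, a contradiction arises; equivalently, every finite connected graph with minimum degree at least 4 contains an even cycle. -/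
open SimpleGraph

section Aux

variable {V : Type*} {G : SimpleGraph V}

/-- On a path, `getVert` is injective (up to the length). -/
lemma aux_getVert_inj {a b : V} (w : G.Walk a b) (hw : w.IsPath) :
    ∀ {i j : ℕ}, i ≤ w.length → j ≤ w.length → w.getVert i = w.getVert j → i = j := by
  induction w with
  | nil => intro i j hi hj _; simp at hi hj; omega
  | @cons u v b h p ih =>
    intro i j hi hj hij
    rw [Walk.cons_isPath_iff] at hw
    rw [Walk.length_cons] at hi hj
    match i, j with
    | 0, 0 => rfl
    | 0, j + 1 =>
      exfalso
      apply hw.2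
      rw [Walk.mem_support_iff_exists_getVert]
      refine ⟨j, ?_, by omega⟩
      rw [Walk.getVert_zero] at hij
      rw [Walk.getVert_cons_succ] at hij
      exact hij.symm
    | i + 1, 0 =>
      exfalso
      apply hw.2
      rw [Walk.mem_support_iff_exists_getVert]
      refine ⟨i, ?_, by omega⟩
      rw [Walk.getVert_zero] at hij
      rw [Walk.getVert_cons_succ] at hij
      exact hij
    | i + 1, j + 1 =>
      rw [Walk.getVert_cons_succ, Walk.getVert_cons_succ] at hij
      have := ih hw.1 (by omega) (by omega) hij
      omega

/-- The edge between the endpoints of a path of length at least 2 is not an edge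
of the path. -/
lemma aux_edge_not_mem {a b : V} (p : G.Walk a b) (hp : p.IsPath) (hl : 2 ≤ p.length) :
    s(a, b) ∉ p.edges := by
  induction p with
  | nil => simp
  | @cons u v b h q ih =>
    rw [Walk.cons_isPath_iff] at hp
    intro hmem
    rw [Walk.edges_cons, List.mem_cons] at hmem
    rcases hmem with heq | hmem
    · rw [Sym2.congr_right] at heq
      subst heq
      -- q : G.Walk b b is a path, so it has length 0
      have h0 : (0 : ℕ) = q.length := by
        apply aux_getVert_inj q hp.1 (by omega) le_rfl
        rw [Walk.getVert_zero, Walk.getVert_length]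
      rw [Walk.length_cons] at hl
      omega
    · exact hp.2 (q.fst_mem_support_of_mem_edges hmem)

lemma aux_concat_isPath {a b c : V} (p : G.Walk a b) (hp : p.IsPath) (h : G.Adj b c)
    (hc : c ∉ p.support) : (p.concat h).IsPath := by
  rw [Walk.isPath_def, Walk.support_concat, List.nodup_append']
  refine ⟨hp.support_nodup, List.nodup_singleton c, ?_⟩
  intro x hx hx'
  rw [List.mem_singleton] at hx'
  subst hx'
  exact hc hx

lemma aux_getVert_takeUntil [DecidableEq V] {a b u : V} (w : G.Walk a b)
    (h : u ∈ w.support) : w.getVert (w.takeUntil u h).length = u := by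
  have key : ∀ (k : ℕ), k = (w.takeUntil u h).length → w.getVert k = u := by
    intro k hk
    conv_lhs => rw [← Walk.take_spec w h]
    rw [Walk.getVert_append, hk]
    simp [Walk.getVert_length]
  exact key _ rfl

lemma aux_getVert_takeUntil_lt [DecidableEq V] {a b u : V} (w : G.Walk a b)
    (h : u ∈ w.support) {i : ℕ} (hi : i < (w.takeUntil u h).length) :
    w.getVert i = (w.takeUntil u h).getVert i := by
  conv_lhs => rw [← Walk.take_spec w h]
  rw [Walk.getVert_append, if_pos hi]

end Aux

/-- every finite connected graph with minimum degree at least 4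
contains an even cycle (equivalently, it cannot happen that every cycle is odd). -/
theorem stmt_17 {V : Type*} [Fintype V] (G : SimpleGraph V) [DecidableRel G.Adj]
    (hconn : G.Connected)
    (hdeg : ∀ v : V, 4 ≤ G.degree v) :
    ∃ (z : V) (w : G.Walk z z), w.IsCycle ∧ Even w.length := by
  classical
  obtain ⟨v⟩ := hconn.nonempty
  set P : ℕ → Prop := fun n => ∃ (x y : V) (p : G.Walk x y), p.IsPath ∧ p.length = n with hPdef
  have hP0 : P 0 := ⟨v, v, Walk.nil, Walk.IsPath.nil, rfl⟩
  set n := Fintype.card V with hn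
  obtain ⟨x0, y0, w, hw, hwlen⟩ :=
    Nat.findGreatest_spec (P := P) (Nat.zero_le n) hP0
  have hmax : ∀ (x y : V) (p : G.Walk x y), p.IsPath → p.length ≤ w.length := by
    intro x y p hp
    rw [hwlen]
    exact Nat.le_findGreatest (le_of_lt hp.length_lt) ⟨x, y, p, hp, rfl⟩
  -- all neighbors of x0 lie on w
  have hsupp : ∀ x, G.Adj x0 x → x ∈ w.support := by
    intro x hx
    by_contra hxs
    have hpath : (Walk.cons hx.symm w).IsPath := (Walk.cons_isPath_iff _ _).2 ⟨hw, hxs⟩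
    have := hmax _ _ _ hpath
    rw [Walk.length_cons] at this
    omega
  -- index of a vertex along w
  set f : V → ℕ := fun x => if hx : x ∈ w.support then (w.takeUntil x hx).length else 0
    with hfdef
  have hfval : ∀ (x : V) (hx : x ∈ w.support), f x = (w.takeUntil x hx).length := by
    intro x hx; simp [hfdef, dif_pos hx]
  have hfget : ∀ (x : V) (hx : x ∈ w.support), w.getVert (f x) = x := by
    intro x hx; rw [hfval x hx]; exact aux_getVert_takeUntil w hx
  have hfle : ∀ (x : V) (hx : x ∈ w.support), f x ≤ w.length := by
    intro x hx; rw [hfval x hx]; exact Walk.length_takeUntil_le w hx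
  have hinj : Set.InjOn f (G.neighborFinset x0) := by
    intro x hxm y hym hxy
    have hx := hsupp x ((G.mem_neighborFinset x0 x).1 hxm)
    have hy := hsupp y ((G.mem_neighborFinset x0 y).1 hym)
    calc x = w.getVert (f x) := (hfget x hx).symm
      _ = w.getVert (f y) := by rw [hxy]
      _ = y := hfget y hy
  have hpos : ∀ x ∈ G.neighborFinset x0, 1 ≤ f x := by
    intro x hxm
    have hadj := (G.mem_neighborFinset x0 x).1 hxm
    have hx := hsupp x hadj
    by_contra hcon
    have h0 : f x = 0 := by omega
    have := hfget x hx
    rw [h0, Walk.getVert_zero] at this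
    rw [← this] at hadj
    exact G.loopless.irrefl x0 hadj
  set S := (G.neighborFinset x0).image f with hSdef
  have hScard : 4 ≤ S.card := by
    rw [hSdef, Finset.card_image_of_injOn hinj, G.card_neighborFinset_eq_degree]
    exact hdeg x0
  set T := S.filter (fun m => 2 ≤ m) with hTdef
  have hTsub : T ⊆ S := Finset.filter_subset _ _
  have hsdiff : S \ T ⊆ {1} := by
    intro m hm
    rw [Finset.mem_sdiff, hTdef, Finset.mem_filter] at hm
    obtain ⟨hmS, hmT⟩ := hm
    have hm2 : ¬ 2 ≤ m := fun h => hmT ⟨hmS, h⟩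
    obtain ⟨x, hxm, hfx⟩ := Finset.mem_image.1 hmS
    have h1 := hpos x hxm
    rw [hfx] at h1
    rw [Finset.mem_singleton]
    omega
  have hTcard : 2 ≤ T.card := by
    have h1 := Finset.card_sdiff_add_card_eq_card hTsub
    have h2 : (S \ T).card ≤ 1 := by
      calc (S \ T).card ≤ ({1} : Finset ℕ).card := Finset.card_le_card hsdiff
        _ = 1 := Finset.card_singleton 1
    omega
  obtain ⟨i0, hi0, j0, hj0, hij0⟩ := Finset.one_lt_card.1 (show 1 < T.card by omega)
  obtain ⟨i, j, hiT, hjT, hij⟩ : ∃ i j, i ∈ T ∧ j ∈ T ∧ i < j := by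
    rcases hij0.lt_or_gt with h | h
    · exact ⟨i0, j0, hi0, hj0, h⟩
    · exact ⟨j0, i0, hj0, hi0, h⟩
  have hi2 : 2 ≤ i := (Finset.mem_filter.1 hiT).2
  obtain ⟨a, ham, hfa⟩ := Finset.mem_image.1 (hTsub hiT)
  obtain ⟨b, hbm, hfb⟩ := Finset.mem_image.1 (hTsub hjT)
  have hadja : G.Adj x0 a := (G.mem_neighborFinset x0 a).1 ham
  have hadjb : G.Adj x0 b := (G.mem_neighborFinset x0 b).1 hbm
  have hsa : a ∈ w.support := hsupp a hadja
  have hsb : b ∈ w.support := hsupp b hadjb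
  have hia : (w.takeUntil a hsa).length = i := by rw [← hfa, hfval a hsa]
  have hjb : (w.takeUntil b hsb).length = j := by rw [← hfb, hfval b hsb]
  have hab : a ≠ b := by
    intro h; subst h
    rw [hfa] at hfb
    omega
  -- first candidate cycle: x0 → … → a → x0, length i + 1
  by_cases h1 : Even (i + 1)
  · refine ⟨x0, Walk.cons hadja (w.takeUntil a hsa).reverse, ?_, ?_⟩
    · rw [Walk.cons_isCycle_iff]
      refine ⟨(hw.takeUntil hsa).reverse, ?_⟩
      rw [Walk.edges_reverse, List.mem_reverse]
      exact aux_edge_not_mem _ (hw.takeUntil hsa) (by omega)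
    · rw [Walk.length_cons, Walk.length_reverse, hia]
      exact h1
  by_cases h2 : Even (j + 1)
  · refine ⟨x0, Walk.cons hadjb (w.takeUntil b hsb).reverse, ?_, ?_⟩
    · rw [Walk.cons_isCycle_iff]
      refine ⟨(hw.takeUntil hsb).reverse, ?_⟩
      rw [Walk.edges_reverse, List.mem_reverse]
      exact aux_edge_not_mem _ (hw.takeUntil hsb) (by omega)
    · rw [Walk.length_cons, Walk.length_reverse, hjb]
      exact h2
  -- third candidate: x0 → a → … → b → x0, length (j - i) + 2
  set q := w.takeUntil b hsb with hqdef
  have hq : q.IsPath := hw.takeUntil hsb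
  have haq : a ∈ q.support := by
    rw [Walk.mem_support_iff_exists_getVert]
    refine ⟨i, ?_, by omega⟩
    rw [← aux_getVert_takeUntil_lt w hsb (show i < (w.takeUntil b hsb).length by
      rw [← hqdef]; omega)]
    rw [← hfa]
    exact hfget a hsa
  set m := q.dropUntil a haq with hmdef
  have hm : m.IsPath := hq.dropUntil haq
  have hlen_split : (q.takeUntil a haq).length + m.length = q.length := by
    conv_rhs => rw [← Walk.take_spec q haq]
    rw [Walk.length_append]
  have htq : (q.takeUntil a haq).length = i := by
    set k := (q.takeUntil a haq).length with hkdef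
    have hk_le : k ≤ q.length := Walk.length_takeUntil_le q haq
    have hkq : q.getVert k = a := aux_getVert_takeUntil q haq
    have hk_lt : k < q.length := by
      rcases lt_or_eq_of_le hk_le with h | h
      · exact h
      · exfalso
        rw [h, Walk.getVert_length] at hkq
        exact hab hkq.symm
    have hwk : w.getVert k = a := by
      rw [aux_getVert_takeUntil_lt w hsb (by rwa [← hqdef] : k < (w.takeUntil b hsb).length)]
      exact hkq
    apply aux_getVert_inj w hw
    · calc k ≤ q.length := hk_le
        _ ≤ w.length := by rw [hqdef]; exact Walk.length_takeUntil_le w hsb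
    · rw [← hfa]; exact hfle a hsa
    · rw [hwk, ← hfa]; exact (hfget a hsa).symm
  have hx0m : x0 ∉ m.support := by
    have hnd : q.support.Nodup := hq.support_nodup
    have hsplit : q.support = (q.takeUntil a haq).support ++ m.support.tail := by
      have := Walk.support_append (q.takeUntil a haq) m
      rw [Walk.take_spec q haq] at this
      exact this
    rw [hsplit, List.nodup_append'] at hnd
    intro hx0
    rw [Walk.support_eq_cons] at hx0
    rcases List.mem_cons.1 hx0 with h | h
    · exact hadja.ne h
    · exact hnd.2.2 (Walk.start_mem_support _) h
  refine ⟨x0, Walk.cons hadja (m.concat hadjb.symm), ?_, ?_⟩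
  · rw [Walk.cons_isCycle_iff]
    refine ⟨aux_concat_isPath m hm hadjb.symm hx0m, ?_⟩
    rw [Walk.edges_concat, List.concat_eq_append, List.mem_append]
    rintro (hmem | hmem)
    · exact hx0m (m.fst_mem_support_of_mem_edges hmem)
    · rw [List.mem_singleton, Sym2.eq_iff] at hmem
      rcases hmem with ⟨hb, _⟩ | ⟨_, hab'⟩
      · exact hadjb.ne hb
      · exact hab hab'
  · rw [Walk.length_cons, Walk.length_concat]
    have hmlen : i + m.length = j := by
      rw [htq] at hlen_split
      rw [hlen_split, hjb]
    rw [Nat.even_iff] at h1 h2 ⊢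
    omega
end
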